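/- Suppose U takes finitely many values, Z ∈ {−1,1} with Z ⟂ U and 0 < P(Z=1) < 1, A ∈ {−1,1}, Y₁, Y₋₁ integrable with (Y₁,Y₋₁) ⟂ (Z,A) | U, and Y = Y₁1{A=1} + Y₋₁1{A=−1}. Let δ̃(u) = P(A=1|Z=1,U=u) − P(A=1|Z=−1,U=u) and δ = E[δ̃(U)] ≠ 0. Then for each fixed decision d ∈ {−1,1}: E[Z·A·Y·1{A=d}/(δ f(Z))] = (1/δ)·( E[δ̃(U)·E[Y₁|U]]·1{d=1} + E[δ̃(U)·E[Y₋₁|U]]·1{d=−1} ). -/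

import Mathlib

/-!
Conditional independence of the potential outcomes from `(Z, A)` given `U` says that, on each
stratum `{U = u}`, the law of `(Y₁, Y₋₁)` restricted to `{Z = z, A = a, U = u}` is proportional
to its law on `{U = u}`; hence
`∫_{Z = z, A = a, U = u} Y_a = P(Z = z, A = a, U = u) · E[Y_a | U = u]`.
On `{A = d}` the weight `Z A / f(Z)` equals `± d / P(Z = z)`, so the estimand is a sum over
strata of `E[Y_d | U = u]` times
`d (P(Z = 1, A = d, U = u) / P(Z = 1) - P(Z = -1, A = d, U = u) / P(Z = -1))`.
Since `Z ⟂ U`, this weight is `d (P(A = d | Z = 1, U = u) - P(A = d | Z = -1, U = u)) P(U = u)`,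
and `P(A = -1 | ·) = 1 - P(A = 1 | ·)` turns it into `δ̃(u) P(U = u)` for both values of `d`.
-/

open MeasureTheory

section

variable {Ω : Type*} [MeasurableSpace Ω] {μ : Measure Ω}

theorem measureReal_smul_setIntegral_comp_eq [IsFiniteMeasure μ] {β E : Type*}
    [MeasurableSpace β] [NormedAddCommGroup E] [NormedSpace ℝ E] {g : Ω → β}
    (hg : AEMeasurable g μ) {S T : Set Ω} (hS : MeasurableSet S) (hT : MeasurableSet T)
    (h : ∀ B, MeasurableSet B →
      μ.real (g ⁻¹' B ∩ S) * μ.real T = μ.real (g ⁻¹' B ∩ T) * μ.real S)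
    {f : β → E} (hf : StronglyMeasurable f) :
    μ.real T • ∫ x in S, f (g x) ∂μ = μ.real S • ∫ x in T, f (g x) ∂μ := by
  have hmap : μ T • (μ.restrict S).map g = μ S • (μ.restrict T).map g := by
    ext B hB
    have hB' := h B hB
    simp only [measureReal_def, ← ENNReal.toReal_mul] at hB'
    rw [ENNReal.toReal_eq_toReal_iff' (by finiteness) (by finiteness)] at hB'
    simp only [Measure.smul_apply, smul_eq_mul, Measure.map_apply_of_aemeasurable hg.restrict hB,
      Measure.restrict_apply' hS, Measure.restrict_apply' hT]
    rw [mul_comm, hB', mul_comm]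
  calc μ.real T • ∫ x in S, f (g x) ∂μ
        = ∫ y, f y ∂(μ T • (μ.restrict S).map g) := by
        rw [integral_smul_measure, integral_map hg.restrict hf.aestronglyMeasurable]; rfl
    _ = ∫ y, f y ∂(μ S • (μ.restrict T).map g) := by rw [hmap]
    _ = μ.real S • ∫ x in T, f (g x) ∂μ := by
        rw [integral_smul_measure, integral_map hg.restrict hf.aestronglyMeasurable]; rfl

theorem setIntegral_comp_eq_measureReal_mul_div [IsFiniteMeasure μ] {β : Type*}
    [MeasurableSpace β] {g : Ω → β} (hg : AEMeasurable g μ) {S T : Set Ω}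
    (hS : MeasurableSet S) (hT : MeasurableSet T)
    (h : ∀ B, MeasurableSet B →
      μ.real (g ⁻¹' B ∩ S) * μ.real T = μ.real (g ⁻¹' B ∩ T) * μ.real S)
    (hT₀ : μ.real T ≠ 0) {f : β → ℝ} (hf : Measurable f) :
    ∫ x in S, f (g x) ∂μ = μ.real S * ((∫ x in T, f (g x) ∂μ) / μ.real T) := by
  have := measureReal_smul_setIntegral_comp_eq hg hS hT h hf.stronglyMeasurable
  rw [smul_eq_mul, smul_eq_mul] at this
  field_simp
  linarith

theorem setIntegral_eq_sum_setIntegral_fiber {E 𝒰 : Type*} [NormedAddCommGroup E]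
    [NormedSpace ℝ E] [Fintype 𝒰] {U : Ω → 𝒰} (hU : ∀ u, MeasurableSet {ω | U ω = u})
    {s : Set Ω} (hs : MeasurableSet s) {f : Ω → E} (hf : IntegrableOn f s μ) :
    ∫ ω in s, f ω ∂μ = ∑ u, ∫ ω in s ∩ {ω | U ω = u}, f ω ∂μ := by
  have hcover : ⋃ u, s ∩ {ω | U ω = u} = s := by
    rw [← Set.inter_iUnion, Set.iUnion_eq_univ_iff.2 fun ω => ⟨U ω, rfl⟩, Set.inter_univ]
  conv_lhs => rw [← hcover]
  exact integral_iUnion_fintype (fun u => hs.inter (hU u))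
    (fun u v huv => Disjoint.inter_left' s (Disjoint.inter_right' s
      (Set.disjoint_left.2 fun ω hu hv => huv (hu.symm.trans hv))))
    fun u => hf.mono_set Set.inter_subset_left

variable {𝒰 : Type*} {Z A : Ω → ℝ} {U : Ω → 𝒰}

theorem integral_ivEstimand_eq {Y Yd fZ : Ω → ℝ} {d : ℝ} (δ : ℝ)
    (hZ : Measurable Z) (hA : Measurable A) (hZpm : ∀ ω, Z ω = 1 ∨ Z ω = -1)
    (hYd : Integrable Yd μ) (hY : ∀ ω, A ω = d → Y ω = Yd ω)
    (hfZ : ∀ ω, fZ ω = μ.real {ω' | Z ω' = 1} * (if Z ω = 1 then 1 else 0) +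
        μ.real {ω' | Z ω' = -1} * (if Z ω = -1 then 1 else 0)) :
    ∫ ω, Z ω * A ω * Y ω * (if A ω = d then 1 else 0) / (δ * fZ ω) ∂μ =
      δ⁻¹ * (d / μ.real {ω | Z ω = 1} * ∫ ω in {ω | Z ω = 1 ∧ A ω = d}, Yd ω ∂μ -
        d / μ.real {ω | Z ω = -1} * ∫ ω in {ω | Z ω = -1 ∧ A ω = d}, Yd ω ∂μ) := by
  have hmeas (z : ℝ) : MeasurableSet {ω | Z ω = z ∧ A ω = d} :=
    (measurableSet_eq_fun hZ measurable_const).inter (measurableSet_eq_fun hA measurable_const)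
  have hpoint (ω : Ω) : Z ω * A ω * Y ω * (if A ω = d then 1 else 0) / (δ * fZ ω) =
      δ⁻¹ * (d / μ.real {ω | Z ω = 1} * {ω | Z ω = 1 ∧ A ω = d}.indicator Yd ω -
        d / μ.real {ω | Z ω = -1} * {ω | Z ω = -1 ∧ A ω = d}.indicator Yd ω) := by
    by_cases hAd : A ω = d
    · rcases hZpm ω with hz | hz <;>
        norm_num [Set.indicator, hfZ, hz, hAd, hY ω hAd] <;> ring
    · simp [Set.indicator, hAd]
  simp_rw [hpoint]
  rw [integral_const_mul, integral_sub ((hYd.indicator (hmeas 1)).const_mul _)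
      ((hYd.indicator (hmeas (-1))).const_mul _), integral_const_mul, integral_const_mul,
    integral_indicator (hmeas 1), integral_indicator (hmeas (-1))]

theorem compliance_weight_eq [IsFiniteMeasure μ] (hA : Measurable A)
    (hApm : ∀ ω, A ω = 1 ∨ A ω = -1) {u : 𝒰}
    (hindep : ∀ z,
      μ.real {ω | Z ω = z ∧ U ω = u} = μ.real {ω | Z ω = z} * μ.real {ω | U ω = u})
    (hpos : ∀ z, (z = 1 ∨ z = -1) → 0 < μ.real {ω | Z ω = z ∧ U ω = u})
    {d : ℝ} (hd : d = 1 ∨ d = -1) :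
    d * (μ.real {ω | Z ω = 1 ∧ A ω = d ∧ U ω = u} / μ.real {ω | Z ω = 1} -
        μ.real {ω | Z ω = -1 ∧ A ω = d ∧ U ω = u} / μ.real {ω | Z ω = -1}) =
      (μ.real {ω | A ω = 1 ∧ Z ω = 1 ∧ U ω = u} / μ.real {ω | Z ω = 1 ∧ U ω = u} -
        μ.real {ω | A ω = 1 ∧ Z ω = -1 ∧ U ω = u} / μ.real {ω | Z ω = -1 ∧ U ω = u}) *
        μ.real {ω | U ω = u} := by
  have hswap (z : ℝ) :
      {ω | A ω = 1 ∧ Z ω = z ∧ U ω = u} = {ω | Z ω = z ∧ A ω = 1 ∧ U ω = u} :=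
    Set.ext fun _ => and_left_comm
  have hcompl (z : ℝ) : μ.real {ω | Z ω = z ∧ A ω = -1 ∧ U ω = u} =
      μ.real {ω | Z ω = z ∧ U ω = u} - μ.real {ω | Z ω = z ∧ A ω = 1 ∧ U ω = u} := by
    rw [eq_sub_iff_add_eq, ← measureReal_sdiff_add_inter (s := {ω | Z ω = z ∧ U ω = u})
      (measurableSet_eq_fun hA (measurable_const (a := 1)))]
    congr 2 <;> ext ω <;> rcases hApm ω with h | h <;> norm_num [h]
  have hne (z : ℝ) (hz : z = 1 ∨ z = -1) :
      μ.real {ω | Z ω = z} ≠ 0 ∧ μ.real {ω | U ω = u} ≠ 0 := by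
    have := (hpos z hz).ne'
    rw [hindep] at this
    exact ⟨left_ne_zero_of_mul this, right_ne_zero_of_mul this⟩
  obtain ⟨hZ₁, hU₀⟩ := hne 1 (Or.inl rfl)
  obtain ⟨hZm, -⟩ := hne (-1) (Or.inr rfl)
  rcases hd with rfl | rfl
  · rw [hswap, hswap, hindep, hindep]
    field_simp
  · rw [hswap, hswap, hcompl, hcompl, hindep, hindep]
    field_simp
    ring

theorem integral_ivEstimand_eq_sum [Fintype 𝒰] {Y Yd fZ : Ω → ℝ} {EYd : 𝒰 → ℝ} {d : ℝ}
    (δ : ℝ) (hZ : Measurable Z) (hA : Measurable A)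
    (hU : ∀ u, MeasurableSet {ω | U ω = u}) (hZpm : ∀ ω, Z ω = 1 ∨ Z ω = -1)
    (hYd : Integrable Yd μ) (hY : ∀ ω, A ω = d → Y ω = Yd ω)
    (hfZ : ∀ ω, fZ ω = μ.real {ω' | Z ω' = 1} * (if Z ω = 1 then 1 else 0) +
        μ.real {ω' | Z ω' = -1} * (if Z ω = -1 then 1 else 0))
    (hmean : ∀ z u, ∫ ω in {ω | Z ω = z ∧ A ω = d ∧ U ω = u}, Yd ω ∂μ =
      μ.real {ω | Z ω = z ∧ A ω = d ∧ U ω = u} * EYd u) :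
    ∫ ω, Z ω * A ω * Y ω * (if A ω = d then 1 else 0) / (δ * fZ ω) ∂μ =
      δ⁻¹ * ∑ u, d * (μ.real {ω | Z ω = 1 ∧ A ω = d ∧ U ω = u} / μ.real {ω | Z ω = 1} -
        μ.real {ω | Z ω = -1 ∧ A ω = d ∧ U ω = u} / μ.real {ω | Z ω = -1}) * EYd u := by
  have hfiber (z : ℝ) : ∫ ω in {ω | Z ω = z ∧ A ω = d}, Yd ω ∂μ =
      ∑ u, μ.real {ω | Z ω = z ∧ A ω = d ∧ U ω = u} * EYd u := by
    rw [setIntegral_eq_sum_setIntegral_fiber (s := {ω | Z ω = z ∧ A ω = d}) hU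
      ((measurableSet_eq_fun hZ measurable_const).inter
        (measurableSet_eq_fun hA measurable_const)) hYd.integrableOn]
    refine Finset.sum_congr rfl fun u _ => ?_
    have hset :
        {ω | Z ω = z ∧ A ω = d} ∩ {ω | U ω = u} = {ω | Z ω = z ∧ A ω = d ∧ U ω = u} :=
      Set.ext fun _ => and_assoc
    rw [hset, hmean]
  rw [integral_ivEstimand_eq δ hZ hA hZpm hYd hY hfZ, hfiber, hfiber, Finset.mul_sum,
    Finset.mul_sum, ← Finset.sum_sub_distrib]
  exact congrArg _ (Finset.sum_congr rfl fun u _ => by ring)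

end

theorem stmt_14_general {Ω 𝒰 : Type*} [MeasurableSpace Ω] [Fintype 𝒰]
    (μ : Measure Ω) [IsProbabilityMeasure μ]
    (P : Set Ω → ℝ) (hP : ∀ s, P s = (μ s).toReal)
    (Z A : Ω → ℝ) (hZmeas : Measurable Z) (hAmeas : Measurable A)
    (hZpm : ∀ ω, Z ω = 1 ∨ Z ω = -1) (hApm : ∀ ω, A ω = 1 ∨ A ω = -1)
    (U : Ω → 𝒰) (hUmeas : ∀ u, MeasurableSet {ω | U ω = u})
    (Y1 Ym1 Y : Ω → ℝ) (hY1 : Integrable Y1 μ) (hYm1 : Integrable Ym1 μ)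
    -- consistency
    (hY : ∀ ω, Y ω = Y1 ω * (if A ω = 1 then 1 else 0) + Ym1 ω * (if A ω = -1 then 1 else 0))
    -- IV positivity
    (hZUpos : ∀ (z : ℝ) (u : 𝒰), (z = 1 ∨ z = -1) → 0 < P {ω | Z ω = z ∧ U ω = u})
    -- IV independence: Z ⟂ U
    (hindep : ∀ (z : ℝ) (u : 𝒰),
      P {ω | Z ω = z ∧ U ω = u} = P {ω | Z ω = z} * P {ω | U ω = u})
    -- latent unconfoundedness: (Y₁,Y₋₁) ⟂ (Z,A) | U, elementwise on events
    (hlatent : ∀ (B : Set (ℝ × ℝ)), MeasurableSet B → ∀ (z a : ℝ) (u : 𝒰),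
      P {ω | (Y1 ω, Ym1 ω) ∈ B ∧ Z ω = z ∧ A ω = a ∧ U ω = u} * P {ω | U ω = u} =
        P {ω | (Y1 ω, Ym1 ω) ∈ B ∧ U ω = u} * P {ω | Z ω = z ∧ A ω = a ∧ U ω = u})
    -- δ̃ and δ
    (δt : 𝒰 → ℝ)
    (hδt : ∀ u, δt u =
      P {ω | A ω = 1 ∧ Z ω = 1 ∧ U ω = u} / P {ω | Z ω = 1 ∧ U ω = u} -
        P {ω | A ω = 1 ∧ Z ω = -1 ∧ U ω = u} / P {ω | Z ω = -1 ∧ U ω = u})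
    (δ : ℝ)
    (fZ : Ω → ℝ)
    (hfZ : ∀ ω, fZ ω = P {ω' | Z ω' = 1} * (if Z ω = 1 then 1 else 0) +
        P {ω' | Z ω' = -1} * (if Z ω = -1 then 1 else 0))
    -- conditional potential-outcome means given U = u
    (EY1 EYm1 : 𝒰 → ℝ)
    (hEY1 : ∀ u, EY1 u = (∫ ω in {ω | U ω = u}, Y1 ω ∂μ) / P {ω | U ω = u})
    (hEYm1 : ∀ u, EYm1 u = (∫ ω in {ω | U ω = u}, Ym1 ω ∂μ) / P {ω | U ω = u})
    (d : ℝ) (hd : d = 1 ∨ d = -1) :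
    (∫ ω, Z ω * A ω * Y ω * (if A ω = d then 1 else 0) / (δ * fZ ω) ∂μ) =
      (1 / δ) *
        ((∑ u : 𝒰, δt u * EY1 u * P {ω | U ω = u}) * (if d = 1 then 1 else 0) +
          (∑ u : 𝒰, δt u * EYm1 u * P {ω | U ω = u}) * (if d = -1 then 1 else 0)) := by
  obtain rfl : P = μ.real := funext hP
  have hUpos (u : 𝒰) : μ.real {ω | U ω = u} ≠ 0 :=
    right_ne_zero_of_mul (hindep 1 u ▸ (hZUpos 1 u (Or.inl rfl)).ne')
  have hmean (f : ℝ × ℝ → ℝ) (hf : Measurable f) (z a : ℝ) (u : 𝒰) :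
      ∫ ω in {ω | Z ω = z ∧ A ω = a ∧ U ω = u}, f (Y1 ω, Ym1 ω) ∂μ =
        μ.real {ω | Z ω = z ∧ A ω = a ∧ U ω = u} *
          ((∫ ω in {ω | U ω = u}, f (Y1 ω, Ym1 ω) ∂μ) / μ.real {ω | U ω = u}) :=
    setIntegral_comp_eq_measureReal_mul_div (hY1.aemeasurable.prodMk hYm1.aemeasurable)
      ((measurableSet_eq_fun hZmeas measurable_const).inter
        ((measurableSet_eq_fun hAmeas measurable_const).inter (hUmeas u)))
      (hUmeas u) (fun B hB => hlatent B hB z a u) (hUpos u) hf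
  have hweight (u : 𝒰) :
      d * (μ.real {ω | Z ω = 1 ∧ A ω = d ∧ U ω = u} / μ.real {ω | Z ω = 1} -
        μ.real {ω | Z ω = -1 ∧ A ω = d ∧ U ω = u} / μ.real {ω | Z ω = -1}) =
      δt u * μ.real {ω | U ω = u} := by
    rw [hδt]
    exact compliance_weight_eq hAmeas hApm (hindep · u) (hZUpos · u) hd
  rcases hd with rfl | rfl
  · rw [integral_ivEstimand_eq_sum δ hZmeas hAmeas hUmeas hZpm hY1 (EYd := EY1)
      (fun ω h => by norm_num [hY, h]) hfZ fun z u => by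
        rw [hEY1]; exact hmean Prod.fst measurable_fst z 1 u]
    simp only [hweight, if_true, if_neg (by norm_num : (1 : ℝ) ≠ -1), mul_one, mul_zero,
      add_zero, one_div]
    exact congrArg _ (Finset.sum_congr rfl fun u _ => mul_right_comm _ _ _)
  · rw [integral_ivEstimand_eq_sum δ hZmeas hAmeas hUmeas hZpm hYm1 (EYd := EYm1)
      (fun ω h => by norm_num [hY, h]) hfZ fun z u => by
        rw [hEYm1]; exact hmean Prod.snd measurable_snd z (-1) u]
    simp only [hweight, if_true, if_neg (by norm_num : (-1 : ℝ) ≠ 1), mul_one, mul_zero,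
      zero_add, one_div]
    exact congrArg _ (Finset.sum_congr rfl fun u _ => mul_right_comm _ _ _)

/-- Key display in the proof of Theorem 1: the weighted IV estimand decomposes into
compliance-weighted potential-outcome means. -/
theorem stmt_14 {Ω 𝒰 : Type*} [MeasurableSpace Ω] [Fintype 𝒰]
    (μ : Measure Ω) [IsProbabilityMeasure μ]
    (P : Set Ω → ℝ) (hP : ∀ s, P s = (μ s).toReal)
    (Z A : Ω → ℝ) (hZmeas : Measurable Z) (hAmeas : Measurable A)
    (hZpm : ∀ ω, Z ω = 1 ∨ Z ω = -1) (hApm : ∀ ω, A ω = 1 ∨ A ω = -1)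
    (U : Ω → 𝒰) (hUmeas : ∀ u, MeasurableSet {ω | U ω = u})
    (Y1 Ym1 Y : Ω → ℝ) (hY1 : Integrable Y1 μ) (hYm1 : Integrable Ym1 μ)
    -- consistency
    (hY : ∀ ω, Y ω = Y1 ω * (if A ω = 1 then 1 else 0) + Ym1 ω * (if A ω = -1 then 1 else 0))
    -- IV positivity
    (hZ1 : 0 < P {ω | Z ω = 1}) (hZ1' : P {ω | Z ω = 1} < 1)
    (hZUpos : ∀ (z : ℝ) (u : 𝒰), (z = 1 ∨ z = -1) → 0 < P {ω | Z ω = z ∧ U ω = u})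
    -- IV independence: Z ⟂ U
    (hindep : ∀ (z : ℝ) (u : 𝒰),
      P {ω | Z ω = z ∧ U ω = u} = P {ω | Z ω = z} * P {ω | U ω = u})
    -- latent unconfoundedness: (Y₁,Y₋₁) ⟂ (Z,A) | U, elementwise on events
    (hlatent : ∀ (B : Set (ℝ × ℝ)), MeasurableSet B → ∀ (z a : ℝ) (u : 𝒰),
      P {ω | (Y1 ω, Ym1 ω) ∈ B ∧ Z ω = z ∧ A ω = a ∧ U ω = u} * P {ω | U ω = u} =
        P {ω | (Y1 ω, Ym1 ω) ∈ B ∧ U ω = u} * P {ω | Z ω = z ∧ A ω = a ∧ U ω = u})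
    -- δ̃ and δ
    (δt : 𝒰 → ℝ)
    (hδt : ∀ u, δt u =
      P {ω | A ω = 1 ∧ Z ω = 1 ∧ U ω = u} / P {ω | Z ω = 1 ∧ U ω = u} -
        P {ω | A ω = 1 ∧ Z ω = -1 ∧ U ω = u} / P {ω | Z ω = -1 ∧ U ω = u})
    (δ : ℝ) (hδ : δ = ∑ u : 𝒰, δt u * P {ω | U ω = u}) (hδ0 : δ ≠ 0)
    (fZ : Ω → ℝ)
    (hfZ : ∀ ω, fZ ω = P {ω' | Z ω' = 1} * (if Z ω = 1 then 1 else 0) +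
        P {ω' | Z ω' = -1} * (if Z ω = -1 then 1 else 0))
    -- conditional potential-outcome means given U = u
    (EY1 EYm1 : 𝒰 → ℝ)
    (hEY1 : ∀ u, EY1 u = (∫ ω in {ω | U ω = u}, Y1 ω ∂μ) / P {ω | U ω = u})
    (hEYm1 : ∀ u, EYm1 u = (∫ ω in {ω | U ω = u}, Ym1 ω ∂μ) / P {ω | U ω = u})
    (d : ℝ) (hd : d = 1 ∨ d = -1) :
    (∫ ω, Z ω * A ω * Y ω * (if A ω = d then 1 else 0) / (δ * fZ ω) ∂μ) =
      (1 / δ) *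
        ((∑ u : 𝒰, δt u * EY1 u * P {ω | U ω = u}) * (if d = 1 then 1 else 0) +
          (∑ u : 𝒰, δt u * EYm1 u * P {ω | U ω = u}) * (if d = -1 then 1 else 0)) :=
  stmt_14_general μ P hP Z A hZmeas hAmeas hZpm hApm U hUmeas Y1 Ym1 Y hY1 hYm1 hY hZUpos hindep
    hlatent δt hδt δ fZ hfZ EY1 EYm1 hEY1 hEYm1 d hd
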